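/- arXiv:1807.05010 — 8 statements merged into one kernel-verified Lean document; each statement's English description precedes it below -/
import Mathlib

section
/- For all p, q, q' ∈ ℍ one has d(p, Σ_p(q)) = d(p, q), and for fixed p the map q ↦ Σ_p(q) is an isometry for d: d(Σ_p(q), Σ_p(q')) = d(q, q'). -/
noncomputable section

/-- The first Heisenberg group `ℍ`, as `ℝ³` with coordinates `(x, y, t)`. -/
structure Heis where
  x : ℝ
  y : ℝ
  t : ℝ

namespace Heis

/-- The Heisenberg group law `(x,y,t)·(x',y',t') = (x+x', y+y', t+t'+(xy'−yx')/2)`. -/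
def mul (p q : Heis) : Heis :=
  ⟨p.x + q.x, p.y + q.y, p.t + q.t + (p.x * q.y - p.y * q.x) / 2⟩

/-- The group inverse. -/
def inv (p : Heis) : Heis := ⟨-p.x, -p.y, -p.t⟩

/-- The map `p̄ = (−x,−y,t)`. -/
def bar (p : Heis) : Heis := ⟨-p.x, -p.y, p.t⟩

/-- The Korányi norm `‖(x,y,t)‖ = ((x²+y²)² + 16t²)^{1/4}`. -/
def knorm (p : Heis) : ℝ := ((p.x ^ 2 + p.y ^ 2) ^ 2 + 16 * p.t ^ 2) ^ ((1 : ℝ) / 4)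

/-- The Korányi distance `d(p,q) = ‖q⁻¹·p‖`. -/
def kdist (p q : Heis) : ℝ := knorm (mul (inv q) p)

/-- The projection `π : ℍ → ℝ²`, `π(x,y,t) = (x,y)`. -/
def pi (p : Heis) : ℝ × ℝ := (p.x, p.y)

/-- The embedding of `ℝ²` into `ℍ`, `z ↦ (z, 0)`. -/
def emb (z : ℝ × ℝ) : Heis := ⟨z.1, z.2, 0⟩

end Heis

/-- The Euclidean point reflection `S_x(y) = 2x − y` in `ℝ²`. -/
def S (a b : ℝ × ℝ) : ℝ × ℝ := 2 • a - b

/-- The symmetric point of `q` relative to `p`: `Σ_p(q) := q · (S_{π(p)}(π(q)) − π(q), 0)`. -/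
def symPt (p q : Heis) : Heis :=
  Heis.mul q (Heis.emb (S (Heis.pi p) (Heis.pi q) - Heis.pi q))

/-- For all `p, q, q' ∈ ℍ`, `d(p, Σ_p(q)) = d(p, q)`, and for fixed `p`
the map `q ↦ Σ_p(q)` is an isometry for `d`. -/
theorem symPt_isometry (p q q' : Heis) :
    Heis.kdist p (symPt p q) = Heis.kdist p q ∧
    Heis.kdist (symPt p q) (symPt p q') = Heis.kdist q q' := by
  constructor <;>
  · simp only [Heis.kdist, Heis.knorm, Heis.mul, Heis.inv, symPt, Heis.emb, Heis.pi, S,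
      Prod.smul_def, Prod.sub_def, smul_eq_mul]
    congr 1
    ring
end
end

section
/- For every p = (x,y,t) ∈ ℍ one has Σ_p(0) = (2x, 2y, 0). Moreover, the map p ↦ Σ_p(0) is not Lipschitz with respect to the Korányi metric d: for p = (x,0,0) and q = (x,y,xy/2) one has d(p,q) = |y| while d(Σ_p(0), Σ_q(0)) = (16y⁴ + 64x²y²)^{1/4} ≥ 2√2·√(|xy|); in particular, for every L > 0 there exist p, q ∈ ℍ with d(Σ_p(0), Σ_q(0)) > L·d(p,q). -/
noncomputable section

lemma quarter_pow (a : ℝ) (ha : 0 ≤ a) : (a ^ 4 : ℝ) ^ ((1 : ℝ) / 4) = a := by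
  rw [← Real.rpow_natCast a 4, ← Real.rpow_mul ha]
  norm_num

lemma le_rpow_quarter {a b : ℝ} (ha : 0 ≤ a) (h : a ^ 4 ≤ b) :
    a ≤ b ^ ((1 : ℝ) / 4) := by
  calc a = (a ^ 4) ^ ((1 : ℝ) / 4) := (quarter_pow a ha).symm
    _ ≤ b ^ ((1 : ℝ) / 4) := Real.rpow_le_rpow (by positivity) h (by norm_num)

/-- `Σ_p(0) = (2x,2y,0)` for `p = (x,y,t)`; the map `p ↦ Σ_p(0)` is not
Lipschitz for the Korányi metric: for `p = (x,0,0)` and `q = (x,y,xy/2)` one has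
`d(p,q) = |y|` while `d(Σ_p(0), Σ_q(0)) = (16y⁴ + 64x²y²)^{1/4} ≥ 2√2·√|xy|`; in particular,
for every `L > 0` there exist `p, q ∈ ℍ` with `d(Σ_p(0), Σ_q(0)) > L·d(p,q)`. -/
theorem symPt_zero_not_lipschitz :
    (∀ x y t : ℝ, symPt ⟨x, y, t⟩ ⟨0, 0, 0⟩ = ⟨2 * x, 2 * y, 0⟩) ∧
    (∀ x y : ℝ,
      Heis.kdist (⟨x, 0, 0⟩ : Heis) ⟨x, y, x * y / 2⟩ = |y| ∧
      Heis.kdist (symPt ⟨x, 0, 0⟩ ⟨0, 0, 0⟩) (symPt ⟨x, y, x * y / 2⟩ ⟨0, 0, 0⟩)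
        = (16 * y ^ 4 + 64 * x ^ 2 * y ^ 2) ^ ((1 : ℝ) / 4) ∧
      2 * Real.sqrt 2 * Real.sqrt |x * y|
        ≤ (16 * y ^ 4 + 64 * x ^ 2 * y ^ 2) ^ ((1 : ℝ) / 4)) ∧
    (∀ L > (0 : ℝ), ∃ p q : Heis,
      L * Heis.kdist p q < Heis.kdist (symPt p ⟨0, 0, 0⟩) (symPt q ⟨0, 0, 0⟩)) := by
  
  have hsym : ∀ x y t : ℝ, symPt ⟨x, y, t⟩ ⟨0, 0, 0⟩ = ⟨2 * x, 2 * y, 0⟩ := by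
    intro x y t
    simp [symPt, Heis.mul, Heis.emb, Heis.pi, S, Prod.smul_def]
  have hmain : ∀ x y : ℝ,
      Heis.kdist (⟨x, 0, 0⟩ : Heis) ⟨x, y, x * y / 2⟩ = |y| ∧
      Heis.kdist (symPt ⟨x, 0, 0⟩ ⟨0, 0, 0⟩) (symPt ⟨x, y, x * y / 2⟩ ⟨0, 0, 0⟩)
        = (16 * y ^ 4 + 64 * x ^ 2 * y ^ 2) ^ ((1 : ℝ) / 4) ∧
      2 * Real.sqrt 2 * Real.sqrt |x * y|
        ≤ (16 * y ^ 4 + 64 * x ^ 2 * y ^ 2) ^ ((1 : ℝ) / 4) := by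
    intro x y
    refine ⟨?_, ?_, ?_⟩
    · show ((_ : ℝ) ^ 2 + _) ^ ((1:ℝ)/4) = _
      simp only [Heis.kdist, Heis.knorm, Heis.mul, Heis.inv]
      have h1 : ((-x + x) ^ 2 + (-y + 0) ^ 2) ^ 2 +
          16 * (-(x * y / 2) + 0 + ((-x) * 0 - (-y) * x) / 2) ^ 2 = |y| ^ 4 := by
        rw [← abs_pow]
        rw [abs_of_nonneg (by positivity)]
        ring
      rw [h1, quarter_pow _ (abs_nonneg y)]
    · rw [hsym, hsym]
      simp only [Heis.kdist, Heis.knorm, Heis.mul, Heis.inv]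
      congr 1
      ring
    · apply le_rpow_quarter (by positivity)
      have h2 : Real.sqrt 2 ^ 2 = 2 := Real.sq_sqrt (by norm_num)
      have h3 : Real.sqrt |x * y| ^ 2 = |x * y| := Real.sq_sqrt (abs_nonneg _)
      have h4 : |x * y| ^ 2 = x ^ 2 * y ^ 2 := by rw [← abs_pow]; rw [abs_of_nonneg (by positivity)]; ring
      have e : (2 * Real.sqrt 2 * Real.sqrt |x * y|) ^ 4
          = 16 * (Real.sqrt 2 ^ 2) ^ 2 * (Real.sqrt |x * y| ^ 2) ^ 2 := by ring
      rw [h2, h3, h4] at e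
      nlinarith [sq_nonneg (y ^ 2), e]
  refine ⟨hsym, hmain, ?_⟩
  intro L hL
  refine ⟨⟨L ^ 2 + 1, 0, 0⟩, ⟨L ^ 2 + 1, 1, (L ^ 2 + 1) * 1 / 2⟩, ?_⟩
  obtain ⟨h1, h2, h3⟩ := hmain (L ^ 2 + 1) 1
  rw [h1, h2]
  have hs : L < 2 * Real.sqrt 2 * Real.sqrt |(L ^ 2 + 1) * 1| := by
    have e1 : |(L ^ 2 + 1) * 1| = L ^ 2 + 1 := by
      rw [mul_one]; exact abs_of_pos (by positivity)
    rw [e1]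
    have hsq : Real.sqrt (L ^ 2 + 1) ^ 2 = L ^ 2 + 1 := Real.sq_sqrt (by positivity)
    have h2' : Real.sqrt 2 ^ 2 = 2 := Real.sq_sqrt (by norm_num)
    have hb : L < Real.sqrt (L ^ 2 + 1) := (Real.lt_sqrt hL.le).mpr (by linarith)
    have ha : (1 : ℝ) ≤ Real.sqrt 2 := by
      rw [show (1 : ℝ) = Real.sqrt 1 from Real.sqrt_one.symm]
      exact Real.sqrt_le_sqrt (by norm_num)
    nlinarith [Real.sqrt_nonneg (L ^ 2 + 1), hb, ha]
  calc L * |(1 : ℝ)| = L := by simp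
    _ < 2 * Real.sqrt 2 * Real.sqrt |(L ^ 2 + 1) * 1| := hs
    _ ≤ _ := h3
end
end

section
/- Let A ⊆ ℝ² be a symmetric set with 0, a, b ∈ A. Then for all integers m, n which are not both odd, the point m·a + n·b belongs to A. -/
/-- A set `A ⊆ ℝ²` is symmetric if `S_x(y) = 2x − y ∈ A` for all `x, y ∈ A`. -/
def SymSetR2 (A : Set (ℝ × ℝ)) : Prop := ∀ x ∈ A, ∀ y ∈ A, S x y ∈ A

def IsPointSymmetric {G : Type*} [AddCommGroup G] (A : Set G) : Prop :=
  ∀ x ∈ A, ∀ y ∈ A, 2 • x - y ∈ A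

namespace IsPointSymmetric

variable {G : Type*} [AddCommGroup G] {A : Set G}

theorem neg_mem (hA : IsPointSymmetric A) (h0 : (0 : G) ∈ A) {y : G} (hy : y ∈ A) : -y ∈ A := by
  simpa using hA 0 h0 y hy

theorem add_two_nsmul_mem (hA : IsPointSymmetric A) (h0 : (0 : G) ∈ A)
    {c y : G} (hc : c ∈ A) (hy : y ∈ A) : y + 2 • c ∈ A := by
  simpa [add_comm] using hA c hc (-y) (hA.neg_mem h0 hy)

theorem sub_two_nsmul_mem (hA : IsPointSymmetric A) (h0 : (0 : G) ∈ A)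
    {c y : G} (hc : c ∈ A) (hy : y ∈ A) : y - 2 • c ∈ A := by
  simpa using hA.neg_mem h0 (hA c hc y hy)

theorem add_two_mul_zsmul_mem (hA : IsPointSymmetric A) (h0 : (0 : G) ∈ A)
    {c y : G} (hc : c ∈ A) (hy : y ∈ A) (k : ℤ) : y + (2 * k) • c ∈ A := by
  induction k using Int.induction_on with
  | zero => simpa using hy
  | succ k ih =>
    convert hA.add_two_nsmul_mem h0 hc ih using 1
    rw [mul_add, mul_one, add_zsmul, two_zsmul, two_nsmul, add_assoc]
  | pred k ih =>
    convert hA.sub_two_nsmul_mem h0 hc ih using 1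
    rw [mul_sub, mul_one, sub_zsmul, two_zsmul, two_nsmul]
    abel

theorem add_lattice_mem (hA : IsPointSymmetric A) (h0 : (0 : G) ∈ A)
    {a b y : G} (ha : a ∈ A) (hb : b ∈ A) (hy : y ∈ A) (k l : ℤ) :
    y + (2 * k) • a + (2 * l) • b ∈ A :=
  hA.add_two_mul_zsmul_mem h0 hb (hA.add_two_mul_zsmul_mem h0 ha hy k) l

end IsPointSymmetric

/-- If `A ⊆ ℝ²` is symmetric and `0, a, b ∈ A`, then for all integers
`m, n` not both odd, `m·a + n·b ∈ A`. -/
theorem symmetric_lattice_points (A : Set (ℝ × ℝ)) (hA : SymSetR2 A) (a b : ℝ × ℝ)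
    (h0 : (0 : ℝ × ℝ) ∈ A) (ha : a ∈ A) (hb : b ∈ A) :
    ∀ m n : ℤ, ¬(Odd m ∧ Odd n) → m • a + n • b ∈ A := by
  have hA : IsPointSymmetric A := hA
  have lattice {y} (hy : y ∈ A) := hA.add_lattice_mem h0 ha hb hy
  intro m n hmn
  obtain ⟨k, rfl | rfl⟩ := Int.even_or_odd' m <;> obtain ⟨l, rfl | rfl⟩ := Int.even_or_odd' n
  · simpa using lattice h0 k l
  · convert lattice hb k l using 1
    rw [add_zsmul, one_zsmul]
    abel
  · convert lattice ha k l using 1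
    rw [add_zsmul, one_zsmul]
    abel
  · exact absurd ⟨odd_two_mul_add_one k, odd_two_mul_add_one l⟩ hmn
end

section
/- Let A ⊆ ℝ² be a symmetric set and let a, b, c ∈ A. Then for all integers m, n which are not both odd, the point a + m·(b − a) + n·(c − a) belongs to A. -/
/-! The map `(m, n) ↦ a + m • (b - a) + n • (c - a)` commutes with point reflections, so the
integer points it sends into `A` form a symmetric subset of `ℤ²` containing `(0,0)`, `(1,0)` and
`(0,1)`. Such a subset contains both axes (walk along a line by reflecting one point through the
next), and reflecting `(0, -n)` through `(k, 0)` gives `(2k, n)`. -/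

section

variable {G H : Type*} [AddCommGroup G] [AddCommGroup H]

def ReflectionClosed (A : Set G) : Prop := ∀ x ∈ A, ∀ y ∈ A, 2 • x - y ∈ A

namespace ReflectionClosed

theorem preimage {A : Set G} (hA : ReflectionClosed A) {f : H → G}
    (hf : ∀ x y, f (2 • x - y) = 2 • f x - f y) : ReflectionClosed (f ⁻¹' A) :=
  fun x hx y hy => by simpa only [Set.mem_preimage, hf] using hA _ hx _ hy

theorem int_mem {T : Set ℤ} (hT : ReflectionClosed T) (h0 : 0 ∈ T) (h1 : 1 ∈ T) (t : ℤ) :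
    t ∈ T := by
  have hnat : ∀ k : ℕ, (k : ℤ) ∈ T := by
    intro k
    induction k using Nat.twoStepInduction with
    | zero => exact h0
    | one => exact h1
    | more k hk hk₁ =>
      have h := hT _ hk₁ _ hk
      rwa [show 2 • ((k + 1 : ℕ) : ℤ) - k = (k + 2 : ℕ) by push_cast; ring] at h
  obtain ⟨k, rfl | rfl⟩ := Int.eq_nat_or_neg t
  · exact hnat k
  · simpa using hT 0 h0 _ (hnat k)

theorem int_prod_mem_of_even_fst {T : Set (ℤ × ℤ)} (hT : ReflectionClosed T)
    (h00 : (0, 0) ∈ T) (h10 : (1, 0) ∈ T) (h01 : (0, 1) ∈ T)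
    {m : ℤ} (hm : Even m) (n : ℤ) :
    (m, n) ∈ T := by
  have hfst : ∀ k : ℤ, (k, 0) ∈ T :=
    (hT.preimage (f := fun k : ℤ => (k, 0)) fun x y => by ext <;> simp).int_mem h00 h10
  have hsnd : ∀ k : ℤ, (0, k) ∈ T :=
    (hT.preimage (f := fun k : ℤ => (0, k)) fun x y => by ext <;> simp).int_mem h00 h01
  obtain ⟨k, rfl⟩ := hm
  have h := hT _ (hfst k) _ (hsnd (-n))
  rwa [show 2 • (k, (0 : ℤ)) - (0, -n) = (k + k, n) by ext <;> simp [two_mul]] at h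

theorem int_prod_mem {T : Set (ℤ × ℤ)} (hT : ReflectionClosed T)
    (h00 : (0, 0) ∈ T) (h10 : (1, 0) ∈ T) (h01 : (0, 1) ∈ T)
    {m n : ℤ} (hmn : ¬(Odd m ∧ Odd n)) :
    (m, n) ∈ T := by
  rcases Int.even_or_odd m with hm | hm
  · exact hT.int_prod_mem_of_even_fst h00 h10 h01 hm n
  · have hn : Even n := Int.not_odd_iff_even.mp fun hn => hmn ⟨hm, hn⟩
    exact (hT.preimage (f := Prod.swap) fun x y => by ext <;> simp).int_prod_mem_of_even_fst
      h00 h01 h10 hn m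

end ReflectionClosed

end

/-- If `A ⊆ ℝ²` is symmetric and `a, b, c ∈ A`, then for all integers
`m, n` not both odd, `a + m·(b − a) + n·(c − a) ∈ A`. -/
theorem symmetric_affine_lattice_points (A : Set (ℝ × ℝ)) (hA : SymSetR2 A)
    (a b c : ℝ × ℝ) (ha : a ∈ A) (hb : b ∈ A) (hc : c ∈ A) :
    ∀ m n : ℤ, ¬(Odd m ∧ Odd n) → a + m • (b - a) + n • (c - a) ∈ A := by
  intro m n hmn
  let f : ℤ × ℤ → ℝ × ℝ := fun p => a + p.1 • (b - a) + p.2 • (c - a)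
  have hf : ∀ p q, f (2 • p - q) = 2 • f p - f q := by
    intro p q
    simp only [f, Prod.fst_sub, Prod.snd_sub, Prod.smul_fst, Prod.smul_snd]
    module
  have hA' : ReflectionClosed A := hA
  exact (hA'.preimage hf).int_prod_mem (by simpa [f] using ha) (by simpa [f] using hb)
    (by simpa [f] using hc) hmn
end

section
/- Let E ⊆ ℍ be symmetric and let q ∈ E. Let (z₁,…,zₙ) be a checkers sequence in π(E) with z₁ = π(q). Then every point of the q-lift of (z₁,…,zₙ) (with each zⱼ identified with (zⱼ,0) ∈ ℍ) is contained in E. -/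
noncomputable section

/-- A set `E ⊆ ℍ` is symmetric if `Σ_p(q) ∈ E` for all `p, q ∈ E`. -/
def SymSetH (E : Set Heis) : Prop := ∀ p ∈ E, ∀ q ∈ E, symPt p q ∈ E

/-- The `p`-lift of a planar point `w` (identified with `(w,0) ∈ ℍ`):
`(w,0)|_p = p · (w − π(p), 0)`. -/
def liftPt (p : Heis) (w : ℝ × ℝ) : Heis := Heis.mul p (Heis.emb (w - Heis.pi p))

/-- The `p`-lift of a planar sequence `(z₀, z₁, …)`: the sequence `(p₀, p₁, …)` with
`p₀ = (z₀,0)|_p` and `p_{j+1} = (z_{j+1},0)|_{p_j}`. -/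
def liftSeq (p : Heis) (z : ℕ → ℝ × ℝ) : ℕ → Heis
  | 0 => liftPt p (z 0)
  | j + 1 => liftPt (liftSeq p z j) (z (j + 1))

/-- `(z₀, …, z_{n-1})` is a checkers sequence in `A ⊆ ℝ²`: each `z_j ∈ A` and each
`z_{j+1} = S_{y_j}(z_j)` for some `y_j ∈ A`. -/
def IsCheckers (A : Set (ℝ × ℝ)) (z : ℕ → ℝ × ℝ) (n : ℕ) : Prop :=
  (∀ j < n, z j ∈ A) ∧ ∀ j : ℕ, j + 1 < n → ∃ y ∈ A, z (j + 1) = S y (z j)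

lemma pi_liftPt (p : Heis) (w : ℝ × ℝ) : Heis.pi (liftPt p w) = w := by
  simp [liftPt, Heis.pi, Heis.mul, Heis.emb]

lemma liftPt_pi (p : Heis) : liftPt p (Heis.pi p) = p := by
  simp [liftPt, Heis.pi, Heis.mul, Heis.emb]

lemma pi_liftSeq (p : Heis) (z : ℕ → ℝ × ℝ) (j : ℕ) :
    Heis.pi (liftSeq p z j) = z j := by
  cases j with
  | zero => exact pi_liftPt _ _
  | succ j => exact pi_liftPt _ _

lemma symPt_eq_liftPt (p' r : Heis) :
    symPt p' r = liftPt r (S (Heis.pi p') (Heis.pi r)) := by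
  simp [symPt, liftPt]

/-- Let `E ⊆ ℍ` be symmetric, `q ∈ E`, and let `(z₁,…,zₙ)` be a checkers
sequence in `π(E)` with `z₁ = π(q)`. Then every point of the `q`-lift of `(z₁,…,zₙ)`
lies in `E`. -/
theorem checkers_lift_mem (E : Set Heis) (hE : SymSetH E) (q : Heis) (hq : q ∈ E)
    (n : ℕ) (hn : 1 ≤ n) (z : ℕ → ℝ × ℝ)
    (hcheckers : IsCheckers (Heis.pi '' E) z n) (hz0 : z 0 = Heis.pi q) :
    ∀ j < n, liftSeq q z j ∈ E := by
  intro j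
  induction j with
  | zero =>
    intro _
    show liftPt q (z 0) ∈ E
    rw [hz0, liftPt_pi]; exact hq
  | succ j ih =>
    intro hjn
    have hj : j < n := Nat.lt_of_succ_lt hjn
    have hmem := ih hj
    obtain ⟨y, hy, hzy⟩ := hcheckers.2 j hjn
    obtain ⟨p', hp', hpy⟩ := hy
    show liftPt (liftSeq q z j) (z (j + 1)) ∈ E
    have : liftPt (liftSeq q z j) (z (j + 1)) = symPt p' (liftSeq q z j) := by
      rw [symPt_eq_liftPt, pi_liftSeq, hpy, ← hzy]
    rw [this]
    exact hE p' hp' _ hmem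
end
end

section
/- Let A ⊆ ℝ² be a symmetric set with 0, a, b ∈ A. If (z₁,…,zₙ) is a sequence such that each zⱼ ∈ 2ℤa + 2ℤb (i.e. zⱼ = 2mⱼa + 2nⱼb for some integers mⱼ, nⱼ) and z_{j+1} − z_j ∈ {2a, −2a, 2b, −2b} for all 1 ≤ j ≤ n−1, then (z₁,…,zₙ) is a checkers sequence in A. -/
noncomputable section

lemma S_eq (x y : ℝ × ℝ) : S x y = 2 • x - y := rfl

lemma intSmul_mem {A : Set (ℝ × ℝ)} (hA : SymSetR2 A) (h0 : (0 : ℝ × ℝ) ∈ A)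
    {a : ℝ × ℝ} (ha : a ∈ A) : ∀ m : ℤ, m • a ∈ A := by
  have hnat : ∀ n : ℕ, ((n : ℤ) • a ∈ A ∧ ((n : ℤ) + 1) • a ∈ A) := by
    intro n
    induction n with
    | zero => exact ⟨by simpa using h0, by simpa using ha⟩
    | succ n ih =>
      refine ⟨by simpa using ih.2, ?_⟩
      have := hA _ ih.2 _ ih.1
      rw [S_eq] at this
      convert this using 1
      push_cast
      module
  intro m
  rcases le_or_gt 0 m with hm | hm
  · obtain ⟨n, rfl⟩ := Int.eq_ofNat_of_zero_le hm
    exact (hnat n).1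
  · obtain ⟨n, hn⟩ := Int.eq_ofNat_of_zero_le (by omega : (0:ℤ) ≤ -m)
    have := hA _ h0 _ ((hnat n).1)
    rw [S_eq] at this
    convert this using 1
    rw [← hn]
    module

lemma lattice_mem {A : Set (ℝ × ℝ)} (hA : SymSetR2 A) (h0 : (0 : ℝ × ℝ) ∈ A)
    {a b : ℝ × ℝ} (ha : a ∈ A) (hb : b ∈ A) (m k : ℤ) :
    m • a + (2 * k) • b ∈ A := by
  have h1 : (k : ℤ) • b ∈ A := intSmul_mem hA h0 hb k
  have h2 : (-m : ℤ) • a ∈ A := intSmul_mem hA h0 ha (-m)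
  have := hA _ h1 _ h2
  rw [S_eq] at this
  convert this using 1
  module

/-- Let `A ⊆ ℝ²` be symmetric with `0, a, b ∈ A`. A sequence with values
in `2ℤa + 2ℤb` whose consecutive differences lie in `{2a, −2a, 2b, −2b}` is a checkers
sequence in `A`. -/
theorem connected_is_checkers (A : Set (ℝ × ℝ)) (hA : SymSetR2 A) (a b : ℝ × ℝ)
    (h0 : (0 : ℝ × ℝ) ∈ A) (ha : a ∈ A) (hb : b ∈ A)
    (n : ℕ) (z : ℕ → ℝ × ℝ)
    (hmem : ∀ j < n, ∃ m k : ℤ, z j = (2 * m) • a + (2 * k) • b)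
    (hstep : ∀ j : ℕ, j + 1 < n →
      z (j + 1) - z j ∈ ({2 • a, -(2 • a), 2 • b, -(2 • b)} : Set (ℝ × ℝ))) :
    IsCheckers A z n := by
  constructor
  · intro j hj
    obtain ⟨m, k, hz⟩ := hmem j hj
    rw [hz]
    exact lattice_mem hA h0 ha hb _ _
  · intro j hj
    obtain ⟨m, k, hz⟩ := hmem j (by omega)
    rcases hstep j hj with h | h | h | h
    · refine ⟨z j + a, ?_, ?_⟩
      · rw [hz]
        have : (2 * m) • a + (2 * k) • b + a = (2 * m + 1) • a + (2 * k) • b := by module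
        rw [this]
        exact lattice_mem hA h0 ha hb _ _
      · rw [S_eq]
        have : z (j+1) = z j + (z (j+1) - z j) := by abel
        rw [this, h]
        module
    · refine ⟨z j - a, ?_, ?_⟩
      · rw [hz]
        have : (2 * m) • a + (2 * k) • b - a = (2 * m - 1) • a + (2 * k) • b := by module
        rw [this]
        exact lattice_mem hA h0 ha hb _ _
      · rw [S_eq]
        have : z (j+1) = z j + (z (j+1) - z j) := by abel
        rw [this, h]
        module
    · refine ⟨z j + b, ?_, ?_⟩
      · rw [hz]
        have : (2 * m) • a + (2 * k) • b + b = (2 * k + 1) • b + (2 * m) • a := by module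
        rw [this]
        exact lattice_mem hA h0 hb ha _ _
      · rw [S_eq]
        have : z (j+1) = z j + (z (j+1) - z j) := by abel
        rw [this, h]
        module
    · refine ⟨z j - b, ?_, ?_⟩
      · rw [hz]
        have : (2 * m) • a + (2 * k) • b - b = (2 * k - 1) • b + (2 * m) • a := by module
        rw [this]
        exact lattice_mem hA h0 hb ha _ _
      · rw [S_eq]
        have : z (j+1) = z j + (z (j+1) - z j) := by abel
        rw [this, h]
        module
end
end

section
/- Let A ⊆ ℝ² be a symmetric set with 0, a, b ∈ A, and let z ∈ 2ℤa + 2ℤb. Then the loops σ_z⁺ := (z, z+2a, z+2a+2b, z+2b, z) and σ_z⁻ := (z, z−2a, z−2a−2b, z−2b, z) are checkers sequences in A. -/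
noncomputable section

/-- The loop `σ_z⁺ = (z, z+2a, z+2a+2b, z+2b, z)` (as a sequence, constant `= z` beyond
index 4). -/
def sigmaPlus (z a b : ℝ × ℝ) : ℕ → ℝ × ℝ
  | 1 => z + 2 • a
  | 2 => z + 2 • a + 2 • b
  | 3 => z + 2 • b
  | _ => z

/-- The loop `σ_z⁻ = (z, z−2a, z−2a−2b, z−2b, z)` (as a sequence, constant `= z` beyond
index 4). -/
def sigmaMinus (z a b : ℝ × ℝ) : ℕ → ℝ × ℝ
  | 1 => z - 2 • a
  | 2 => z - 2 • a - 2 • b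
  | 3 => z - 2 • b
  | _ => z

/-!
Since `S_0(w) = -w`, a symmetric set containing `0` satisfies `A = -A`, and then
`w + 2c = S_c(-w)` shows that `A` is invariant under translation by `2c` for every `c ∈ A`,
hence under the whole lattice `2ℤa + 2ℤb`. Each step `x ↦ x + 2v` of the loops, with
`v ∈ {±a, ±b}`, is the reflection in `x + v`, which lies in `A` because `x` is in the lattice.
-/

namespace SymSetR2

variable {A : Set (ℝ × ℝ)}

theorem neg_mem (hA : SymSetR2 A) (h0 : (0 : ℝ × ℝ) ∈ A) {w : ℝ × ℝ} (hw : w ∈ A) :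
    -w ∈ A := by
  simpa [S] using hA 0 h0 w hw

def translations (hA : SymSetR2 A) (h0 : (0 : ℝ × ℝ) ∈ A) : AddSubgroup (ℝ × ℝ) where
  carrier := {v | ∀ w ∈ A, w + v ∈ A}
  zero_mem' w hw := by simpa using hw
  add_mem' hu hv w hw := by simpa only [add_assoc] using hv _ (hu w hw)
  neg_mem' {v} hv w hw := by
    simpa [sub_eq_add_neg, add_comm] using hA.neg_mem h0 (hv _ (hA.neg_mem h0 hw))

theorem mem_of_mem_translations (hA : SymSetR2 A) (h0 : (0 : ℝ × ℝ) ∈ A) {v : ℝ × ℝ}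
    (hv : v ∈ hA.translations h0) : v ∈ A := by
  simpa using hv 0 h0

theorem two_smul_mem_translations (hA : SymSetR2 A) (h0 : (0 : ℝ × ℝ) ∈ A) {c : ℝ × ℝ}
    (hc : c ∈ A) : 2 • c ∈ hA.translations h0 := fun w hw => by
  simpa [S, add_comm] using hA c hc (-w) (hA.neg_mem h0 hw)

theorem isCheckers_of_two_smul_steps (hA : SymSetR2 A) (h0 : (0 : ℝ × ℝ) ∈ A)
    {z : ℕ → ℝ × ℝ} {n : ℕ} (hz0 : z 0 ∈ hA.translations h0)
    (hstep : ∀ j, j + 1 < n → ∃ v ∈ A, z (j + 1) = z j + 2 • v) : IsCheckers A z n := by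
  have hzT : ∀ j < n, z j ∈ hA.translations h0 := by
    intro j hj
    induction j with
    | zero => exact hz0
    | succ j ih =>
      obtain ⟨v, hv, hzv⟩ := hstep j hj
      rw [hzv]
      exact add_mem (ih (by omega)) (hA.two_smul_mem_translations h0 hv)
  refine ⟨fun j hj => hA.mem_of_mem_translations h0 (hzT j hj), fun j hj => ?_⟩
  obtain ⟨v, hv, hzv⟩ := hstep j hj
  refine ⟨z j + v, by simpa [add_comm] using hzT j (by omega) v hv, ?_⟩
  rw [hzv, S]
  module

end SymSetR2

/-- Let `A ⊆ ℝ²` be symmetric with `0, a, b ∈ A`, and let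
`z ∈ 2ℤa + 2ℤb`. Then the loops `σ_z⁺` and `σ_z⁻` are checkers sequences in `A`. -/
theorem loops_are_checkers (A : Set (ℝ × ℝ)) (hA : SymSetR2 A) (a b : ℝ × ℝ)
    (h0 : (0 : ℝ × ℝ) ∈ A) (ha : a ∈ A) (hb : b ∈ A)
    (z : ℝ × ℝ) (hz : ∃ m k : ℤ, z = (2 * m) • a + (2 * k) • b) :
    IsCheckers A (sigmaPlus z a b) 5 ∧ IsCheckers A (sigmaMinus z a b) 5 := by
  obtain ⟨m, k, rfl⟩ := hz
  have hz_mem : (2 * m) • a + (2 * k) • b ∈ hA.translations h0 := by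
    rw [mul_comm 2 m, mul_comm 2 k, mul_zsmul, mul_zsmul]
    exact add_mem (zsmul_mem (hA.two_smul_mem_translations h0 ha) m)
      (zsmul_mem (hA.two_smul_mem_translations h0 hb) k)
  have ha' := hA.neg_mem h0 ha
  have hb' := hA.neg_mem h0 hb
  refine ⟨hA.isCheckers_of_two_smul_steps h0 hz_mem ?_,
    hA.isCheckers_of_two_smul_steps h0 hz_mem ?_⟩
    <;> intro j hj <;> replace hj : j < 4 := by omega
  all_goals interval_cases j
  exacts [⟨a, ha, rfl⟩, ⟨b, hb, rfl⟩, ⟨-a, ha', by simp only [sigmaPlus]; module⟩,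
    ⟨-b, hb', by simp only [sigmaPlus]; module⟩, ⟨-a, ha', by simp only [sigmaMinus]; module⟩,
    ⟨-b, hb', by simp only [sigmaMinus]; module⟩, ⟨a, ha, by simp only [sigmaMinus]; module⟩,
    ⟨b, hb, by simp only [sigmaMinus]; module⟩]
end
end

section
/- Let E ⊆ ℍ be symmetric, and assume 0, a, b ∈ π(E). Then 2ma + 2nb ∈ π(E) for all integers m, n, and for every z ∈ 2ℤa + 2ℤb there exists t_z ∈ ℝ such that (z, t_z + 4k·det(a,b)) ∈ E for all k ∈ ℤ, where det((a₁,a₂),(b₁,b₂)) := a₁b₂ − a₂b₁. -/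
/-!
The symmetry `Σ_p` depends on `p` only through `c = π(p)` and lies over the planar reflection
`S_c`, so `π(E)` is a symmetric planar set; composing the reflections in `0` and `c` translates
by `±2c`, which yields the lattice `2ℤa + 2ℤb`. In `ℍ`, the four reflections with centres over
`0, a, 2b, 2b - a` (all in `π(E)`) compose to the vertical translation by `4 det(a, b)`, and
undoing them in reverse order translates by `-4 det(a, b)`.
-/

noncomputable section

attribute [ext] Heis

namespace Heis

/-- `Σ_p` in coordinates, where `c = π(p)`. -/
def reflect (c : ℝ × ℝ) (q : Heis) : Heis :=
  ⟨2 * c.1 - q.x, 2 * c.2 - q.y, q.t + (q.x * c.2 - q.y * c.1)⟩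

def vshift (s : ℝ) (q : Heis) : Heis := ⟨q.x, q.y, q.t + s⟩

lemma vshift_vshift (s s' : ℝ) (q : Heis) : vshift s (vshift s' q) = vshift (s' + s) q := by
  ext <;> simp only [vshift, add_assoc]

lemma pi_reflect (c : ℝ × ℝ) (q : Heis) : pi (reflect c q) = S c (pi q) := by
  ext <;> simp [reflect, pi, S, two_mul]

lemma reflect_four_cycle (a b : ℝ × ℝ) (q : Heis) :
    reflect (2 • b - a) (reflect (2 • b) (reflect a (reflect 0 q)))
      = vshift (4 * (a.1 * b.2 - a.2 * b.1)) q := by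
  ext <;> simp only [reflect, vshift, two_nsmul, Prod.fst_sub, Prod.snd_sub, Prod.fst_add,
    Prod.snd_add, Prod.fst_zero, Prod.snd_zero] <;> ring

lemma reflect_four_cycle_reverse (a b : ℝ × ℝ) (q : Heis) :
    reflect 0 (reflect a (reflect (2 • b) (reflect (2 • b - a) q)))
      = vshift (-(4 * (a.1 * b.2 - a.2 * b.1))) q := by
  ext <;> simp only [reflect, vshift, two_nsmul, Prod.fst_sub, Prod.snd_sub, Prod.fst_add,
    Prod.snd_add, Prod.fst_zero, Prod.snd_zero] <;> ring

end Heis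

open Heis

lemma symPt_eq_reflect (p q : Heis) : symPt p q = reflect (pi p) q := by
  ext
  · simp [symPt, reflect, Heis.mul, emb, pi, S, two_mul]
  · simp [symPt, reflect, Heis.mul, emb, pi, S, two_mul]
  · simp [symPt, reflect, Heis.mul, emb, pi, S]; ring

/-- Composing the reflections in `0` and in `c` translates by `±2c`. -/
lemma SymSetR2.add_two_mul_zsmul_mem {A : Set (ℝ × ℝ)} (hA : SymSetR2 A) (h0 : (0 : ℝ × ℝ) ∈ A)
    {c : ℝ × ℝ} (hc : c ∈ A) {w : ℝ × ℝ} (hw : w ∈ A) (n : ℤ) : w + (2 * n) • c ∈ A := by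
  induction n using Int.induction_on with
  | zero => simpa using hw
  | succ n ih =>
    convert hA c hc _ (hA 0 h0 _ ih) using 1
    simp only [S]; module
  | pred n ih =>
    convert hA 0 h0 _ (hA c hc _ ih) using 1
    simp only [S]; module

namespace SymSetH

variable {E : Set Heis}

lemma reflect_mem (hE : SymSetH E) {c : ℝ × ℝ} (hc : c ∈ pi '' E) {q : Heis} (hq : q ∈ E) :
    reflect c q ∈ E := by
  obtain ⟨p, hp, rfl⟩ := hc
  simpa only [symPt_eq_reflect] using hE p hp q hq

lemma symSetR2_image_pi (hE : SymSetH E) : SymSetR2 (pi '' E) := by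
  rintro c hc _ ⟨q, hq, rfl⟩
  exact ⟨reflect c q, hE.reflect_mem hc hq, pi_reflect c q⟩

lemma vshift_mem (hE : SymSetH E) {a b : ℝ × ℝ} (h0 : (0 : ℝ × ℝ) ∈ pi '' E)
    (ha : a ∈ pi '' E) (hb : b ∈ pi '' E) {q : Heis} (hq : q ∈ E) (k : ℤ) :
    vshift (4 * k * (a.1 * b.2 - a.2 * b.1)) q ∈ E := by
  have h2b : 2 • b ∈ pi '' E := by simpa [S] using hE.symSetR2_image_pi b hb 0 h0
  have h2ba : 2 • b - a ∈ pi '' E := hE.symSetR2_image_pi b hb a ha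
  induction k using Int.induction_on with
  | zero => simpa [vshift] using hq
  | succ k ih =>
    have h := hE.reflect_mem h2ba <| hE.reflect_mem h2b <| hE.reflect_mem ha <| hE.reflect_mem h0 ih
    rw [reflect_four_cycle, vshift_vshift] at h
    convert h using 2
    push_cast; ring
  | pred k ih =>
    have h := hE.reflect_mem h0 <| hE.reflect_mem ha <| hE.reflect_mem h2b <| hE.reflect_mem h2ba ih
    rw [reflect_four_cycle_reverse, vshift_vshift] at h
    convert h using 2
    push_cast; ring

end SymSetH

/-- Let `E ⊆ ℍ` be symmetric with `0, a, b ∈ π(E)`. Then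
`2ma + 2nb ∈ π(E)` for all `m, n ∈ ℤ`, and for every `z ∈ 2ℤa + 2ℤb` there exists
`t_z ∈ ℝ` with `(z, t_z + 4k·det(a,b)) ∈ E` for all `k ∈ ℤ`. -/
theorem discrete_structure (E : Set Heis) (hE : SymSetH E) (a b : ℝ × ℝ)
    (h0 : (0 : ℝ × ℝ) ∈ Heis.pi '' E) (ha : a ∈ Heis.pi '' E) (hb : b ∈ Heis.pi '' E) :
    (∀ m n : ℤ, (2 * m) • a + (2 * n) • b ∈ Heis.pi '' E) ∧
    (∀ z : ℝ × ℝ, (∃ m n : ℤ, z = (2 * m) • a + (2 * n) • b) →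
      ∃ tz : ℝ, ∀ k : ℤ,
        (⟨z.1, z.2, tz + 4 * (k : ℝ) * (a.1 * b.2 - a.2 * b.1)⟩ : Heis) ∈ E) := by
  have hA := hE.symSetR2_image_pi
  have lattice (m n : ℤ) : (2 * m) • a + (2 * n) • b ∈ pi '' E := by
    have hma : (2 * m) • a ∈ pi '' E := by simpa using hA.add_two_mul_zsmul_mem h0 ha h0 m
    exact hA.add_two_mul_zsmul_mem h0 hb hma n
  refine ⟨lattice, ?_⟩
  rintro z ⟨m, n, rfl⟩
  obtain ⟨P, hP, hPz⟩ := lattice m n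
  refine ⟨P.t, fun k => ?_⟩
  rw [← hPz]
  exact hE.vshift_mem h0 ha hb hP k
end
end
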